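/- For every sequence of tuning parameters η_n > 0 and every sequence a_n of nonnegative real numbers, with E_{S,n} = [θ̃_S − σ̂ a_n, θ̃_S + σ̂ a_n] and C_{S,n} = [θ̂_S − a_n, θ̂_S + a_n], one has inf_{θ∈ℝ} P_{n,θ}(θ ∈ E_{S,n}) − inf_{θ∈ℝ} P_{n,θ}(θ ∈ C_{S,n}) → 0 as n → ∞. -/

import Mathlib

open MeasureTheory ProbabilityTheory Filter
open scoped NNReal

/-- Standard normal cumulative distribution function Φ. -/
noncomputable def stdNormCDF (x : ℝ) : ℝ :=
  ((gaussianReal 0 1) (Set.Iic x)).toReal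

/-- Soft-thresholding (LASSO) estimator with threshold η, as a function of ȳ. -/
noncomputable def softThresh (η y : ℝ) : ℝ := Real.sign y * max (|y| - η) 0

/-- Hard-thresholding estimator with threshold η, as a function of ȳ. -/
noncomputable def hardThresh (η y : ℝ) : ℝ := if η < |y| then y else 0

/-- Adaptive LASSO estimator with tuning parameter η, as a function of ȳ. -/
noncomputable def adaLasso (η y : ℝ) : ℝ := if |y| ≤ η then 0 else y - η ^ 2 / y

/-- Coverage probability `P_{n,θ}(θ ∈ [est(ȳ) - a, est(ȳ) + b])` in the
known-variance case (σ = 1), where ȳ ~ N(θ, 1/n). -/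
noncomputable def cover (n : ℕ) (est : ℝ → ℝ) (a b θ : ℝ) : ℝ :=
  ((gaussianReal θ ((n : ℝ≥0))⁻¹)
    {y : ℝ | est y - a ≤ θ ∧ θ ≤ est y + b}).toReal

/-- The distribution of `σ̂ = sqrt(Q/(n-1))` where `Q ~ χ²_{n-1}`; i.e. the law of the
square root of a chi-square random variable with `n-1` degrees of freedom divided by
`n - 1` (whose density is `h_n`). The chi-square distribution with `k` degrees of
freedom is the Gamma distribution with shape `k/2` and rate `1/2`. -/
noncomputable def sigmaHatLaw (n : ℕ) : Measure ℝ :=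
  (gammaMeasure (((n : ℝ) - 1) / 2) (1 / 2)).map
    (fun q => Real.sqrt (q / ((n : ℝ) - 1)))

/-- The cumulative distribution function `T_{n-1}` of the Student t-distribution with
`n-1` degrees of freedom, via `T_{n-1}(x) = ∫₀^∞ Φ(s x) h_n(s) ds`. -/
noncomputable def studentCDF (n : ℕ) (x : ℝ) : ℝ :=
  ∫ s, stdNormCDF (s * x) ∂(sigmaHatLaw n)

/-- Coverage probability `P_{n,θ}(θ ∈ [est(σ̂, ȳ) - σ̂ a, est(σ̂, ȳ) + σ̂ a])` in the
unknown-variance case (true σ = 1): `ȳ ~ N(θ, 1/n)` and `σ̂` (independent of `ȳ`) has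
law `sigmaHatLaw n`; here `est s y` is the feasible estimator computed from `ȳ = y` and
`σ̂ = s`. -/
noncomputable def coverUV (n : ℕ) (est : ℝ → ℝ → ℝ) (a θ : ℝ) : ℝ :=
  (((gaussianReal θ ((n : ℝ≥0))⁻¹).prod (sigmaHatLaw n))
    {p : ℝ × ℝ | est p.2 p.1 - p.2 * a ≤ θ ∧ θ ≤ est p.2 p.1 + p.2 * a}).toReal

/-!
With known variance the coverage probability of `[θ̂_S - a, θ̂_S + a]` is an explicit difference of
two values of `Φ`; it never drops below `Φ(√n (a + η)) - Φ(√n (η - a))` and equals it as soon as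
`θ > a`. Conditionally on `σ̂ = s` the feasible interval is the infeasible one with `(η, a)`
replaced by `(s η, s a)`, so its coverage is the `σ̂`-average of these known-variance coverages.
Because the known-variance minimum is attained at every `s > 0` once `θ` is large, the infimum
over `θ` passes under the integral by dominated convergence. Finally
`|Φ(s u) - Φ(u)| ≤ 2 |s - 1|`, so the two infima differ by at most
`4 E|σ̂ - 1| ≤ 4 E|σ̂² - 1| ≤ 4 √(Var σ̂²) = 4 √(2 / (n - 1))`.
-/

open Set
open scoped Topology ENNReal Interval

lemma ciInf_eq_of_forall_ge_of_tendsto {α ι : Type*} [ConditionallyCompleteLattice α]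
    [TopologicalSpace α] [ClosedIciTopology α] {l : Filter ι} [l.NeBot] {f : ι → α} {b : α}
    (hle : ∀ i, b ≤ f i) (hlim : Tendsto f l (𝓝 b)) : ⨅ i, f i = b :=
  have := l.nonempty_of_neBot
  le_antisymm (ge_of_tendsto hlim (Eventually.of_forall (ciInf_le ⟨b, by simpa [lowerBounds]⟩)))
    (le_ciInf hle)

lemma integral_le_sqrt_integral_sq {Ω : Type*} [MeasurableSpace Ω] {μ : Measure Ω}
    [IsProbabilityMeasure μ] {X : Ω → ℝ} (hX : MemLp X 2 μ) :
    ∫ ω, X ω ∂μ ≤ √(∫ ω, X ω ^ 2 ∂μ) := by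
  apply Real.le_sqrt_of_sq_le
  have := variance_nonneg X μ
  rw [variance_eq_sub hX] at this
  simpa using this

lemma stdNormCDF_eq_measureReal (x : ℝ) : stdNormCDF x = (gaussianReal 0 1).real (Iic x) := rfl

lemma stdNormCDF_nonneg (x : ℝ) : 0 ≤ stdNormCDF x := measureReal_nonneg

lemma stdNormCDF_le_one (x : ℝ) : stdNormCDF x ≤ 1 := measureReal_le_one

lemma abs_stdNormCDF_sub_le_one (x y : ℝ) : |stdNormCDF x - stdNormCDF y| ≤ 1 :=
  abs_sub_le_of_nonneg_of_le (stdNormCDF_nonneg x) (stdNormCDF_le_one x)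
    (stdNormCDF_nonneg y) (stdNormCDF_le_one y)

lemma stdNormCDF_sub_stdNormCDF {x y : ℝ} (h : x ≤ y) :
    stdNormCDF y - stdNormCDF x = (gaussianReal 0 1).real (Ioc x y) := by
  rw [← Iic_sdiff_Iic, measureReal_sdiff (Iic_subset_Iic.2 h) measurableSet_Iic]
  rfl

lemma monotone_stdNormCDF : Monotone stdNormCDF := fun _ _ h =>
  sub_nonneg.1 ((stdNormCDF_sub_stdNormCDF h).symm ▸ measureReal_nonneg)

@[fun_prop]
lemma measurable_stdNormCDF : Measurable stdNormCDF := monotone_stdNormCDF.measurable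

lemma abs_stdNormCDF_sub (x y : ℝ) :
    |stdNormCDF x - stdNormCDF y| = (gaussianReal 0 1).real (Ι x y) := by
  rcases le_total x y with h | h
  · rw [abs_sub_comm, abs_of_nonneg (sub_nonneg.2 (monotone_stdNormCDF h)),
      stdNormCDF_sub_stdNormCDF h, uIoc_of_le h]
  · rw [abs_of_nonneg (sub_nonneg.2 (monotone_stdNormCDF h)),
      stdNormCDF_sub_stdNormCDF h, uIoc_of_ge h]

lemma stdNormCDF_neg (x : ℝ) : stdNormCDF (-x) = 1 - stdNormCDF x := by
  have := nullSingletonClass_gaussianReal (μ := 0) one_ne_zero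
  have hsymm : (gaussianReal 0 1).map (fun y => -y) = gaussianReal 0 1 := by
    simpa using gaussianReal_map_neg (μ := 0) (v := 1)
  rw [stdNormCDF_eq_measureReal, ← hsymm, map_measureReal_apply measurable_neg measurableSet_Iic,
    Set.neg_preimage, Set.neg_Iic, neg_neg, stdNormCDF_eq_measureReal,
    ← probReal_compl_eq_one_sub measurableSet_Iic, compl_Iic]
  exact measureReal_congr Ioi_ae_eq_Ici.symm

lemma gaussianPDFReal_zero_one_le {b t : ℝ} (h : b ^ 2 ≤ t ^ 2) :
    gaussianPDFReal 0 1 t ≤ gaussianPDFReal 0 1 b := by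
  simp only [gaussianPDFReal_def, NNReal.coe_one, sub_zero, mul_one]
  gcongr

lemma gaussianReal_real_Ioc_le {x y b : ℝ} (hxy : x ≤ y) (hb : ∀ t ∈ Ioc x y, b ^ 2 ≤ t ^ 2) :
    (gaussianReal 0 1).real (Ioc x y) ≤ (y - x) * gaussianPDFReal 0 1 b := by
  have hbound : gaussianReal 0 1 (Ioc x y)
      ≤ ENNReal.ofReal (gaussianPDFReal 0 1 b) * volume (Ioc x y) := by
    rw [gaussianReal_apply 0 one_ne_zero, ← setLIntegral_const]
    exact setLIntegral_mono measurable_const fun t ht =>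
      ENNReal.ofReal_le_ofReal (gaussianPDFReal_zero_one_le (hb t ht))
  rw [Real.volume_Ioc, ← ENNReal.ofReal_mul (gaussianPDFReal_nonneg _ _ _), mul_comm] at hbound
  exact ENNReal.toReal_le_of_le_ofReal (by nlinarith [gaussianPDFReal_nonneg 0 1 b]) hbound

open Real in
lemma abs_mul_gaussianPDFReal_half_le_one (u : ℝ) : |u| * gaussianPDFReal 0 1 (u / 2) ≤ 1 := by
  have hexp : 1 + u ^ 2 / 8 ≤ exp (u ^ 2 / 8) := by linarith [add_one_le_exp (u ^ 2 / 8)]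
  have hπ : 2 ≤ √(2 * π) := Real.le_sqrt_of_sq_le (by nlinarith [pi_gt_three])
  have hu : |u| ≤ 2 * exp (u ^ 2 / 8) := by nlinarith [sq_abs u, sq_nonneg (|u| - 2)]
  simp only [gaussianPDFReal_def, NNReal.coe_one, sub_zero, mul_one]
  rw [show -(u / 2) ^ 2 / 2 = -(u ^ 2 / 8) by ring, exp_neg, ← mul_inv,
    mul_inv_le_iff₀ (by positivity), one_mul]
  nlinarith [exp_pos (u ^ 2 / 8)]

lemma abs_stdNormCDF_mul_sub_le (s u : ℝ) :
    |stdNormCDF (s * u) - stdNormCDF u| ≤ 2 * |s - 1| := by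
  rcases lt_or_ge s (1 / 2) with hs2 | hs2
  · calc _ ≤ 1 := abs_stdNormCDF_sub_le_one _ _
      _ ≤ 2 * |s - 1| := by rw [abs_of_neg (by linarith)]; linarith
  -- for `s ≥ 1/2` the density between `s u` and `u` is at most `φ(u / 2)`, and `|u| φ(u / 2) ≤ 1`
  have hfar : ∀ t ∈ Ioc (min (s * u) u) (max (s * u) u), (u / 2) ^ 2 ≤ t ^ 2 := by
    rintro t ⟨ht1, ht2⟩
    rcases le_total 0 u with hu | hu
    · have : u / 2 ≤ min (s * u) u := le_min (by nlinarith) (by linarith)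
      nlinarith
    · have : max (s * u) u ≤ u / 2 := max_le (by nlinarith) (by linarith)
      nlinarith
  have hlen : max (s * u) u - min (s * u) u = |s - 1| * |u| := by
    rw [max_sub_min_eq_abs, abs_sub_comm, ← abs_mul, sub_one_mul]
  rw [abs_stdNormCDF_sub, uIoc]
  calc _ ≤ (max (s * u) u - min (s * u) u) * gaussianPDFReal 0 1 (u / 2) :=
        gaussianReal_real_Ioc_le min_le_max hfar
    _ = |s - 1| * (|u| * gaussianPDFReal 0 1 (u / 2)) := by rw [hlen, mul_assoc]
    _ ≤ |s - 1| * 1 := by gcongr; exact abs_mul_gaussianPDFReal_half_le_one u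
    _ ≤ 2 * |s - 1| := by linarith [abs_nonneg (s - 1)]

lemma gaussianReal_map_standardize {n : ℕ} (hn : n ≠ 0) (θ : ℝ) :
    (gaussianReal θ (n : ℝ≥0)⁻¹).map (fun y => √n * (y - θ)) = gaussianReal 0 1 := by
  rw [show (fun y => √n * (y - θ)) = (√n * ·) ∘ (· - θ) from rfl,
    ← Measure.map_map (by fun_prop) (by fun_prop), gaussianReal_map_sub_const,
    gaussianReal_map_const_mul, sub_self, mul_zero]
  congr 1
  ext
  simp [hn]

lemma gaussianReal_real_Icc {n : ℕ} (hn : n ≠ 0) (θ : ℝ) {L U : ℝ} (hLU : L ≤ U) :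
    (gaussianReal θ (n : ℝ≥0)⁻¹).real (Icc L U)
      = stdNormCDF (√n * (U - θ)) - stdNormCDF (√n * (L - θ)) := by
  have hsqrt : 0 < √(n : ℝ) := Real.sqrt_pos.2 (by positivity)
  have := nullSingletonClass_gaussianReal (μ := 0) one_ne_zero
  have hpre : (fun y => √n * (y - θ)) ⁻¹' Icc (√n * (L - θ)) (√n * (U - θ)) = Icc L U := by
    ext y
    simp only [mem_preimage, mem_Icc, mul_le_mul_iff_right₀ hsqrt, sub_le_sub_iff_right]
  rw [← hpre, ← map_measureReal_apply (by fun_prop) measurableSet_Icc,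
    gaussianReal_map_standardize hn, stdNormCDF_sub_stdNormCDF (by gcongr)]
  exact measureReal_congr Ioc_ae_eq_Icc.symm

lemma softThresh_le_iff {c t y : ℝ} (hc : 0 < c) :
    softThresh c y ≤ t ↔ y ≤ t + if 0 ≤ t then c else -c := by
  rcases lt_trichotomy y 0 with hy | rfl | hy
  · rw [softThresh, Real.sign_of_neg hy, abs_of_neg hy]
    split_ifs <;> constructor <;> intro h <;> cases max_cases (-y - c) 0 <;> linarith
  · simp only [softThresh, Real.sign_zero, zero_mul]
    split_ifs <;> constructor <;> intro h <;> linarith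
  · rw [softThresh, Real.sign_of_pos hy, abs_of_pos hy]
    split_ifs <;> constructor <;> intro h <;> cases max_cases (y - c) 0 <;> linarith

lemma softThresh_neg (c y : ℝ) : softThresh c (-y) = -softThresh c y := by
  simp only [softThresh, Real.sign_neg, abs_neg, neg_mul]

lemma le_softThresh_iff {c t y : ℝ} (hc : 0 < c) :
    t ≤ softThresh c y ↔ t + (if 0 < t then c else -c) ≤ y := by
  rw [← neg_le_neg_iff, ← softThresh_neg, softThresh_le_iff hc]
  split_ifs <;> constructor <;> intro <;> linarith

lemma cover_softThresh {n : ℕ} (hn : n ≠ 0) {c r : ℝ} (hc : 0 < c) (hr : 0 ≤ r) (θ : ℝ) :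
    cover n (softThresh c) r r θ
      = stdNormCDF (√n * (r + if 0 ≤ θ + r then c else -c))
        - stdNormCDF (√n * (-r + if 0 < θ - r then c else -c)) := by
  have hevent : {y | softThresh c y - r ≤ θ ∧ θ ≤ softThresh c y + r}
      = Icc (θ - r + if 0 < θ - r then c else -c) (θ + r + if 0 ≤ θ + r then c else -c) := by
    ext y
    rw [mem_Icc, ← softThresh_le_iff hc, ← le_softThresh_iff hc]
    exact ⟨fun ⟨h₁, h₂⟩ => ⟨by linarith, by linarith⟩, fun ⟨h₁, h₂⟩ => ⟨by linarith, by linarith⟩⟩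
  rw [cover, hevent, ← measureReal_def, gaussianReal_real_Icc hn θ (by split_ifs <;> linarith)]
  ring_nf

noncomputable def softCoverInf (n : ℕ) (c r : ℝ) : ℝ :=
  stdNormCDF (√n * (r + c)) - stdNormCDF (√n * (-r + c))

lemma softCoverInf_le_cover_softThresh {n : ℕ} (hn : n ≠ 0) {c r : ℝ} (hc : 0 < c) (hr : 0 ≤ r)
    (θ : ℝ) : softCoverInf n c r ≤ cover n (softThresh c) r r θ := by
  rw [cover_softThresh hn hc hr, softCoverInf]
  split_ifs with hup hlow hlow
  · rfl
  · have := monotone_stdNormCDF (show √n * (-r + -c) ≤ √n * (-r + c) by gcongr; linarith)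
    linarith
  · linarith
  · rw [show √n * (r + -c) = -(√n * (-r + c)) by ring,
      show √n * (-r + -c) = -(√n * (r + c)) by ring, stdNormCDF_neg, stdNormCDF_neg]
    linarith

lemma cover_softThresh_of_lt {n : ℕ} (hn : n ≠ 0) {c r θ : ℝ} (hc : 0 < c) (hr : 0 ≤ r)
    (hθ : r < θ) : cover n (softThresh c) r r θ = softCoverInf n c r := by
  rw [cover_softThresh hn hc hr, if_pos (by linarith), if_pos (by linarith), softCoverInf]

lemma iInf_cover_softThresh {n : ℕ} (hn : n ≠ 0) {c r : ℝ} (hc : 0 < c) (hr : 0 ≤ r) :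
    ⨅ θ, cover n (softThresh c) r r θ = softCoverInf n c r :=
  ciInf_eq_of_forall_ge_of_tendsto (l := atTop) (softCoverInf_le_cover_softThresh hn hc hr)
    (tendsto_const_nhds.congr' ((eventually_gt_atTop r).mono fun _ hθ =>
      (cover_softThresh_of_lt hn hc hr hθ).symm))

lemma isProbabilityMeasure_sigmaHatLaw {n : ℕ} (hn : 2 ≤ n) :
    IsProbabilityMeasure (sigmaHatLaw n) :=
  have : IsProbabilityMeasure (gammaMeasure (((n : ℝ) - 1) / 2) (1 / 2)) :=
    isProbabilityMeasure_gammaMeasure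
      (by linarith [show (2 : ℝ) ≤ n by exact_mod_cast hn]) one_half_pos
  Measure.isProbabilityMeasure_map (by fun_prop)

lemma gammaMeasure_ae_pos (a r : ℝ) : ∀ᵐ q ∂gammaMeasure a r, 0 < q := by
  rw [gammaMeasure,
    ae_withDensity_iff (f := gammaPDF a r) (measurable_gammaPDFReal a r).ennreal_ofReal]
  filter_upwards [volume.ae_ne 0] with q hq0 hq
  exact lt_of_le_of_ne (not_lt.1 (mt gammaPDF_of_neg hq)) hq0.symm

lemma sigmaHatLaw_ae_pos {n : ℕ} (hn : 2 ≤ n) : ∀ᵐ s ∂sigmaHatLaw n, 0 < s := by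
  have hm : (0 : ℝ) < n - 1 := by linarith [show (2 : ℝ) ≤ n by exact_mod_cast hn]
  rw [sigmaHatLaw, ae_map_iff (by fun_prop) measurableSet_Ioi]
  filter_upwards [gammaMeasure_ae_pos _ _] with q hq
  positivity

section GammaMoments

variable {a r : ℝ}

lemma pow_mul_gammaPDFReal (ha : 0 < a) (hr : 0 < r) (k : ℕ) (x : ℝ) :
    x ^ k * gammaPDFReal a r x
      = Real.Gamma (a + k) / (Real.Gamma a * r ^ k) * gammaPDFReal (a + k) r x := by
  have hΓ := (Real.Gamma_pos_of_pos ha).ne'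
  rcases Nat.eq_zero_or_pos k with rfl | hk
  · simp [hΓ]
  have hΓk := (Real.Gamma_pos_of_pos (by positivity : 0 < a + k)).ne'
  have hk' : a - 1 + k ≠ 0 := by
    have : (1 : ℝ) ≤ k := by exact_mod_cast hk
    linarith
  unfold gammaPDFReal
  split_ifs with hx
  · rw [show a + k - 1 = a - 1 + k by ring, Real.rpow_add_natCast' hx hk',
      Real.rpow_add_natCast' hr.le (by positivity)]
    field_simp
  · simp

lemma integrable_gammaMeasure_iff (ha : 0 < a) (hr : 0 < r) {g : ℝ → ℝ} :
    Integrable g (gammaMeasure a r) ↔ Integrable (fun x => gammaPDFReal a r x * g x) := by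
  rw [gammaMeasure, show gammaPDF a r = fun x => ((gammaPDFReal a r x).toNNReal : ℝ≥0∞) from rfl,
    integrable_withDensity_iff_integrable_smul (by fun_prop)]
  simp only [NNReal.smul_def, Real.coe_toNNReal _ (gammaPDFReal_nonneg ha hr _), smul_eq_mul]

lemma integral_gammaMeasure (ha : 0 < a) (hr : 0 < r) (g : ℝ → ℝ) :
    ∫ x, g x ∂gammaMeasure a r = ∫ x, gammaPDFReal a r x * g x := by
  rw [gammaMeasure, show gammaPDF a r = fun x => ((gammaPDFReal a r x).toNNReal : ℝ≥0∞) from rfl,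
    integral_withDensity_eq_integral_smul (by fun_prop)]
  simp only [NNReal.smul_def, Real.coe_toNNReal _ (gammaPDFReal_nonneg ha hr _), smul_eq_mul]

lemma integrable_pow_gammaMeasure (ha : 0 < a) (hr : 0 < r) (k : ℕ) :
    Integrable (fun x => x ^ k) (gammaMeasure a r) := by
  have := isProbabilityMeasure_gammaMeasure (by positivity : 0 < a + k) hr
  have h := (integrable_gammaMeasure_iff (a := a + k) (by positivity) hr).1
    (integrable_const (1 : ℝ))
  rw [integrable_gammaMeasure_iff ha hr]
  simp_rw [mul_comm (gammaPDFReal a r _), pow_mul_gammaPDFReal ha hr k]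
  simpa using h.const_mul (Real.Gamma (a + k) / (Real.Gamma a * r ^ k))

lemma integral_pow_gammaMeasure (ha : 0 < a) (hr : 0 < r) (k : ℕ) :
    ∫ x, x ^ k ∂gammaMeasure a r = Real.Gamma (a + k) / (Real.Gamma a * r ^ k) := by
  have := isProbabilityMeasure_gammaMeasure (by positivity : 0 < a + k) hr
  have h := integral_gammaMeasure (a := a + k) (by positivity) hr fun _ => 1
  simp only [integral_const, probReal_univ, smul_eq_mul, mul_one] at h
  rw [integral_gammaMeasure ha hr]
  simp_rw [mul_comm (gammaPDFReal a r _), pow_mul_gammaPDFReal ha hr k]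
  rw [integral_const_mul, ← h, mul_one]

end GammaMoments

section ChiSquare

variable {m : ℝ}

lemma div_sub_one_sq_eq_poly (hm : 0 < m) :
    (fun q : ℝ => (q / m - 1) ^ 2) = fun q => m⁻¹ ^ 2 * q ^ 2 + (-(2 / m) * q ^ 1 + 1) := by
  funext q
  field_simp
  ring

lemma integrable_div_sub_one_sq_gammaMeasure (hm : 0 < m) :
    Integrable (fun q => (q / m - 1) ^ 2) (gammaMeasure (m / 2) (1 / 2)) := by
  have := isProbabilityMeasure_gammaMeasure (by positivity : 0 < m / 2) one_half_pos
  rw [div_sub_one_sq_eq_poly hm]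
  exact ((integrable_pow_gammaMeasure (by positivity) one_half_pos 2).const_mul _).add
    (((integrable_pow_gammaMeasure (by positivity) one_half_pos 1).const_mul _).add
      (integrable_const 1))

lemma integral_div_sub_one_sq_gammaMeasure (hm : 0 < m) :
    ∫ q, (q / m - 1) ^ 2 ∂gammaMeasure (m / 2) (1 / 2) = 2 / m := by
  have ha : 0 < m / 2 := by positivity
  have hr : (0 : ℝ) < 1 / 2 := one_half_pos
  have := isProbabilityMeasure_gammaMeasure ha hr
  have h₂ : Integrable (fun q => m⁻¹ ^ 2 * q ^ 2) (gammaMeasure (m / 2) (1 / 2)) :=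
    (integrable_pow_gammaMeasure ha hr 2).const_mul _
  have h₁ : Integrable (fun q => -(2 / m) * q ^ 1) (gammaMeasure (m / 2) (1 / 2)) :=
    (integrable_pow_gammaMeasure ha hr 1).const_mul _
  have h₁' : Integrable (fun q => -(2 / m) * q ^ 1 + 1) (gammaMeasure (m / 2) (1 / 2)) :=
    h₁.add (integrable_const 1)
  rw [div_sub_one_sq_eq_poly hm, integral_add h₂ h₁', integral_add h₁ (integrable_const 1),
    integral_const_mul, integral_const_mul, integral_pow_gammaMeasure ha hr,
    integral_pow_gammaMeasure ha hr, integral_const, probReal_univ, one_smul]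
  push_cast
  rw [show m / 2 + 2 = m / 2 + 1 + 1 by ring, Real.Gamma_add_one (by positivity),
    Real.Gamma_add_one ha.ne']
  field_simp
  ring

lemma sq_sqrt_div_sub_one_sq_ae_eq (hm : 0 < m) :
    (fun q => (√(q / m) ^ 2 - 1) ^ 2)
      =ᵐ[gammaMeasure (m / 2) (1 / 2)] fun q => (q / m - 1) ^ 2 := by
  filter_upwards [gammaMeasure_ae_pos _ _] with q hq
  rw [Real.sq_sqrt (by positivity)]

end ChiSquare

lemma integrable_sq_sub_one_sq_sigmaHatLaw {n : ℕ} (hn : 2 ≤ n) :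
    Integrable (fun s => (s ^ 2 - 1) ^ 2) (sigmaHatLaw n) := by
  have hm : (0 : ℝ) < n - 1 := by linarith [show (2 : ℝ) ≤ n by exact_mod_cast hn]
  rw [sigmaHatLaw, integrable_map_measure (by fun_prop) (by fun_prop)]
  exact (integrable_div_sub_one_sq_gammaMeasure hm).congr (sq_sqrt_div_sub_one_sq_ae_eq hm).symm

lemma integral_sq_sub_one_sq_sigmaHatLaw {n : ℕ} (hn : 2 ≤ n) :
    ∫ s, (s ^ 2 - 1) ^ 2 ∂sigmaHatLaw n = 2 / ((n : ℝ) - 1) := by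
  have hm : (0 : ℝ) < n - 1 := by linarith [show (2 : ℝ) ≤ n by exact_mod_cast hn]
  rw [sigmaHatLaw, integral_map (by fun_prop) (by fun_prop),
    integral_congr_ae (sq_sqrt_div_sub_one_sq_ae_eq hm), integral_div_sub_one_sq_gammaMeasure hm]

lemma abs_cover_le_one (n : ℕ) (est : ℝ → ℝ) (a b θ : ℝ) : |cover n est a b θ| ≤ 1 := by
  rw [cover, abs_of_nonneg ENNReal.toReal_nonneg]
  exact measureReal_le_one

section Fubini

variable {n : ℕ} {est : ℝ → ℝ → ℝ}

lemma measurableSet_coverUV_event (hest : Measurable (Function.uncurry est)) (a θ : ℝ) :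
    MeasurableSet {p : ℝ × ℝ | est p.2 p.1 - p.2 * a ≤ θ ∧ θ ≤ est p.2 p.1 + p.2 * a} := by
  have h : Measurable fun p : ℝ × ℝ => est p.2 p.1 := hest.comp measurable_swap
  exact (measurableSet_le (h.sub (by fun_prop)) measurable_const).inter
    (measurableSet_le measurable_const (h.add (by fun_prop)))

lemma measurable_cover_of_uncurry (hest : Measurable (Function.uncurry est)) (n : ℕ) (a θ : ℝ) :
    Measurable fun s => cover n (est s) (s * a) (s * a) θ :=
  (measurable_measure_prodMk_right (measurableSet_coverUV_event hest a θ)).ennreal_toReal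

lemma coverUV_eq_integral_cover (hn : 2 ≤ n) (hest : Measurable (Function.uncurry est))
    (a θ : ℝ) : coverUV n est a θ = ∫ s, cover n (est s) (s * a) (s * a) θ ∂sigmaHatLaw n := by
  have := isProbabilityMeasure_sigmaHatLaw hn
  rw [coverUV, Measure.prod_apply_symm (measurableSet_coverUV_event hest a θ),
    ← integral_toReal (measurable_measure_prodMk_right
      (measurableSet_coverUV_event hest a θ)).aemeasurable
      (ae_of_all _ fun _ => measure_lt_top _ _)]
  rfl

end Fubini

lemma Real.monotone_sign : Monotone Real.sign := by
  intro x y h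
  unfold Real.sign
  split_ifs <;> linarith

lemma measurable_uncurry_softThresh_mul (e : ℝ) :
    Measurable (Function.uncurry fun s y => softThresh (s * e) y) :=
  (Real.monotone_sign.measurable.comp measurable_snd).mul (by fun_prop)

lemma abs_softCoverInf_le_one (n : ℕ) (c r : ℝ) : |softCoverInf n c r| ≤ 1 :=
  abs_stdNormCDF_sub_le_one _ _

lemma integrable_softCoverInf_mul {n : ℕ} (hn : 2 ≤ n) (e a : ℝ) :
    Integrable (fun s => softCoverInf n (s * e) (s * a)) (sigmaHatLaw n) :=
  have := isProbabilityMeasure_sigmaHatLaw hn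
  .of_bound (by unfold softCoverInf; fun_prop) 1
    (ae_of_all _ fun s => abs_softCoverInf_le_one n _ _)

lemma iInf_coverUV_softThresh {n : ℕ} (hn : 2 ≤ n) {e a : ℝ} (he : 0 < e) (ha : 0 ≤ a) :
    ⨅ θ, coverUV n (fun s y => softThresh (s * e) y) a θ
      = ∫ s, softCoverInf n (s * e) (s * a) ∂sigmaHatLaw n := by
  have := isProbabilityMeasure_sigmaHatLaw hn
  have hest := measurable_uncurry_softThresh_mul e
  simp_rw [coverUV_eq_integral_cover hn hest]
  refine ciInf_eq_of_forall_ge_of_tendsto (l := atTop) (fun θ => ?_) ?_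
  · refine integral_mono_ae (integrable_softCoverInf_mul hn e a)
      (.of_bound (measurable_cover_of_uncurry hest n a θ).aestronglyMeasurable 1
        (ae_of_all _ fun s => abs_cover_le_one _ _ _ _ _)) ?_
    filter_upwards [sigmaHatLaw_ae_pos hn] with s hs
    exact softCoverInf_le_cover_softThresh (by omega) (mul_pos hs he) (mul_nonneg hs.le ha) θ
  · refine tendsto_integral_filter_of_dominated_convergence (fun _ => 1)
      (.of_forall fun θ => (measurable_cover_of_uncurry hest n a θ).aestronglyMeasurable)
      (.of_forall fun θ => ae_of_all _ fun s => abs_cover_le_one _ _ _ _ _) (integrable_const 1) ?_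
    filter_upwards [sigmaHatLaw_ae_pos hn] with s hs
    exact tendsto_const_nhds.congr' ((eventually_gt_atTop (s * a)).mono fun θ hθ =>
      (cover_softThresh_of_lt (by omega) (mul_pos hs he) (mul_nonneg hs.le ha) hθ).symm)

lemma memLp_sq_sub_one_sigmaHatLaw {n : ℕ} (hn : 2 ≤ n) :
    MemLp (fun s : ℝ => s ^ 2 - 1) 2 (sigmaHatLaw n) :=
  (memLp_two_iff_integrable_sq (by fun_prop)).2 (integrable_sq_sub_one_sq_sigmaHatLaw hn)

lemma integral_abs_sq_sub_one_sigmaHatLaw_le {n : ℕ} (hn : 2 ≤ n) :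
    ∫ s, |s ^ 2 - 1| ∂sigmaHatLaw n ≤ √(2 / ((n : ℝ) - 1)) := by
  have := isProbabilityMeasure_sigmaHatLaw hn
  simpa only [Real.norm_eq_abs, sq_abs, integral_sq_sub_one_sq_sigmaHatLaw hn] using
    integral_le_sqrt_integral_sq (memLp_sq_sub_one_sigmaHatLaw hn).norm

lemma abs_sub_one_le_abs_sq_sub_one {s : ℝ} (hs : 0 ≤ s) : |s - 1| ≤ |s ^ 2 - 1| := by
  rw [show s ^ 2 - 1 = (s - 1) * (s + 1) by ring, abs_mul, abs_of_pos (by linarith : 0 < s + 1)]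
  nlinarith [abs_nonneg (s - 1)]

lemma abs_softCoverInf_mul_sub_le (n : ℕ) (c r s : ℝ) :
    |softCoverInf n (s * c) (s * r) - softCoverInf n c r| ≤ 4 * |s - 1| := by
  have h₁ := abs_stdNormCDF_mul_sub_le s (√n * (r + c))
  have h₂ := abs_stdNormCDF_mul_sub_le s (√n * (-r + c))
  rw [softCoverInf, softCoverInf, show √n * (s * r + s * c) = s * (√n * (r + c)) by ring,
    show √n * (-(s * r) + s * c) = s * (√n * (-r + c)) by ring]
  calc _ = |(stdNormCDF (s * (√n * (r + c))) - stdNormCDF (√n * (r + c)))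
        - (stdNormCDF (s * (√n * (-r + c))) - stdNormCDF (√n * (-r + c)))| := by ring_nf
    _ ≤ _ := (abs_sub _ _).trans (by linarith)

lemma abs_integral_softCoverInf_sub_le {n : ℕ} (hn : 2 ≤ n) (e a : ℝ) :
    |∫ s, softCoverInf n (s * e) (s * a) ∂sigmaHatLaw n - softCoverInf n e a|
      ≤ 4 * √(2 / ((n : ℝ) - 1)) := by
  have := isProbabilityMeasure_sigmaHatLaw hn
  have hint := ((memLp_sq_sub_one_sigmaHatLaw hn).integrable one_le_two).abs
  calc _ = |∫ s, (softCoverInf n (s * e) (s * a) - softCoverInf n e a) ∂sigmaHatLaw n| := by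
        rw [integral_sub (integrable_softCoverInf_mul hn e a) (integrable_const _), integral_const,
          probReal_univ, one_smul]
    _ ≤ ∫ s, |softCoverInf n (s * e) (s * a) - softCoverInf n e a| ∂sigmaHatLaw n :=
        abs_integral_le_integral_abs
    _ ≤ ∫ s, 4 * |s ^ 2 - 1| ∂sigmaHatLaw n := by
        refine integral_mono_of_nonneg (.of_forall fun _ => abs_nonneg _) (hint.const_mul 4) ?_
        filter_upwards [sigmaHatLaw_ae_pos hn] with s hs
        exact (abs_softCoverInf_mul_sub_le n e a s).trans
          (mul_le_mul_of_nonneg_left (abs_sub_one_le_abs_sq_sub_one hs.le) zero_le_four)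
    _ ≤ 4 * √(2 / ((n : ℝ) - 1)) := by
        rw [integral_const_mul]
        exact mul_le_mul_of_nonneg_left (integral_abs_sq_sub_one_sigmaHatLaw_le hn) zero_le_four

/-- Theorem 2 (soft-thresholding): the infimal coverage probabilities of
`E_{S,n} = [θ̃_S - σ̂ a_n, θ̃_S + σ̂ a_n]` and `C_{S,n} = [θ̂_S - a_n, θ̂_S + a_n]`
are asymptotically equal. -/
theorem stmt_15 (η : ℕ → ℝ) (hη : ∀ n, 0 < η n) (a : ℕ → ℝ) (ha : ∀ n, 0 ≤ a n) :
    Tendsto (fun n : ℕ =>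
        (⨅ θ : ℝ, coverUV n (fun s y => softThresh (s * η n) y) (a n) θ) -
          (⨅ θ : ℝ, cover n (softThresh (η n)) (a n) (a n) θ))
      atTop (nhds 0) := by
  have hbound : Tendsto (fun n : ℕ => 4 * √(2 / ((n : ℝ) - 1))) atTop (𝓝 0) := by
    have : Tendsto (fun n : ℕ => 2 / ((n : ℝ) - 1)) atTop (𝓝 0) :=
      tendsto_const_nhds.div_atTop
        (tendsto_atTop_add_const_right _ (-1) tendsto_natCast_atTop_atTop)
    simpa using ((Real.continuous_sqrt.tendsto 0).comp this).const_mul 4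
  refine squeeze_zero_norm' ((eventually_ge_atTop 2).mono fun n hn => ?_) hbound
  rw [iInf_coverUV_softThresh hn (hη n) (ha n), iInf_cover_softThresh (by omega) (hη n) (ha n)]
  exact abs_integral_softCoverInf_sub_le hn (η n) (a n)
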